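/- Let 0 < θ < π, let μ₁ = (π−θ)/π and μ₂ = μ₃ = (π+θ)/(2π), and set a₁ = −1, a₂ = ((π−θ) + 2i√(πθ))/(π+θ), a₃ = ((π−θ) − 2i√(πθ))/(π+θ). Then |a₂| = |a₃| = 1 and μ₁/a₁ + μ₂/a₂ + μ₃/a₃ = 0. -/

import Mathlib

/-!
`(π - θ, 2√(πθ), π + θ)` is a Pythagorean triple, so `a₂` lies on the unit circle, and `a₃ = conj a₂`.
Hence `1/a₂ + 1/a₃ = conj a₂ + a₂ = 2 Re a₂ = 2(π - θ)/(π + θ)`, and `μ₂` times this is exactly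
`μ₁ = -μ₁/a₁`.
-/

open Complex ComplexConjugate

lemma sub_sq_add_two_mul_sqrt_mul_sq {a b : ℝ} (ha : 0 ≤ a) (hb : 0 ≤ b) :
    (a - b) ^ 2 + (2 * √(a * b)) ^ 2 = (a + b) ^ 2 := by
  rw [mul_pow, Real.sq_sqrt (mul_nonneg ha hb)]
  ring

lemma norm_ofReal_add_I_mul_div_eq_one {x y r : ℝ} (h : x ^ 2 + y ^ 2 = r ^ 2) (hr : 0 < r) :
    ‖((x : ℂ) + I * y) / r‖ = 1 := by
  rw [norm_div, norm_real, Real.norm_of_nonneg hr.le, mul_comm, norm_add_mul_I, h,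
    Real.sqrt_sq hr.le, div_self hr.ne']

lemma inv_add_inv_conj_of_norm_eq_one {z : ℂ} (hz : ‖z‖ = 1) : z⁻¹ + (conj z)⁻¹ = 2 * z.re := by
  have hz' : z * conj z = 1 := by rw [mul_conj, normSq_eq_norm_sq, hz]; simp
  rw [inv_eq_of_mul_eq_one_right hz', inv_eq_of_mul_eq_one_left hz', add_comm, add_conj,
    ofReal_mul, ofReal_ofNat]

theorem stmt_8 (θ : ℝ) (hθ : θ ∈ Set.Ioo 0 Real.pi) :
    let μ₁ : ℂ := (((Real.pi - θ) / Real.pi : ℝ) : ℂ)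
    let μ₂ : ℂ := (((Real.pi + θ) / (2 * Real.pi) : ℝ) : ℂ)
    let μ₃ : ℂ := (((Real.pi + θ) / (2 * Real.pi) : ℝ) : ℂ)
    let a₁ : ℂ := -1
    let a₂ : ℂ := (((Real.pi - θ : ℝ) : ℂ) + 2 * I * ((Real.sqrt (Real.pi * θ) : ℝ) : ℂ)) /
      ((Real.pi + θ : ℝ) : ℂ)
    let a₃ : ℂ := (((Real.pi - θ : ℝ) : ℂ) - 2 * I * ((Real.sqrt (Real.pi * θ) : ℝ) : ℂ)) /
      ((Real.pi + θ : ℝ) : ℂ)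
    ‖a₂‖ = 1 ∧ ‖a₃‖ = 1 ∧ μ₁ / a₁ + μ₂ / a₂ + μ₃ / a₃ = 0 := by
  intro μ₁ μ₂ μ₃ a₁ a₂ a₃
  have hθ₀ : 0 < θ := hθ.1
  have hπθ : 0 < Real.pi + θ := by positivity
  have ha₂ : a₂ = (((Real.pi - θ : ℝ) : ℂ) + I * ((2 * √(Real.pi * θ) : ℝ) : ℂ)) /
      ((Real.pi + θ : ℝ) : ℂ) := by
    simp only [a₂]
    push_cast
    ring
  have ha₃ : a₃ = conj a₂ := by
    simp only [a₂, a₃, map_div₀, map_add, map_mul, conj_ofReal, conj_I, map_ofNat]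
    ring
  have hnorm : ‖a₂‖ = 1 := ha₂ ▸ norm_ofReal_add_I_mul_div_eq_one
    (sub_sq_add_two_mul_sqrt_mul_sq Real.pi_pos.le hθ₀.le) hπθ
  refine ⟨hnorm, by rw [ha₃, norm_conj, hnorm], ?_⟩
  have hre : a₂.re = (Real.pi - θ) / (Real.pi + θ) := by
    rw [ha₂, div_ofReal_re]; simp
  calc μ₁ / a₁ + μ₂ / a₂ + μ₃ / a₃ = -μ₁ + μ₂ * (a₂⁻¹ + (conj a₂)⁻¹) := by
        change μ₁ / -1 + μ₂ / a₂ + μ₂ / a₃ = _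
        rw [ha₃]; ring
    _ = -μ₁ + μ₂ * (2 * a₂.re) := by rw [inv_add_inv_conj_of_norm_eq_one hnorm]
    _ = 0 := by
        rw [hre, neg_add_eq_zero]
        simp only [μ₁, μ₂]
        norm_cast
        field_simp
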